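/- arXiv:1304.7529 — 2 statements merged into one kernel-verified Lean document; each statement's English description precedes it below -/
import Mathlib

section
/- Let Φ: X ⊸ X be a contracting compact-valued multi-function on a complete metric space X with Lipschitz constant λ < 1. Then Fix(Φ) ⊆ K, where K is the unique nonempty compact set with Φ(K) = K; consequently the fixed fractal 𝔽(Φ) = closure(⋃_n Φⁿ(Fix(Φ))) equals K. -/
open Set

/-- Image of a set under a set-valued map `Φ : X → Set X`. -/
def sImage {X : Type*} (Φ : X → Set X) (A : Set X) : Set X := ⋃ a ∈ A, Φ a

/-- Iterates `Φⁿ(A)`. -/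
def sIter {X : Type*} (Φ : X → Set X) : ℕ → Set X → Set X
  | 0, A => A
  | n + 1, A => sImage Φ (sIter Φ n A)

/-- Fixed points of a set-valued map. -/
def sFix {X : Type*} (Φ : X → Set X) : Set X := {x | x ∈ Φ x}

/-!
Both claims come from one estimate: if `y ∈ Φ k` then `infDist y Φ(A) ≤ λ · infDist k A`.
For a fixed point `x`, taking `y = k = x` and `A = K ⊇ Φ(K)` gives
`infDist x K ≤ λ · infDist x K`, so `x ∈ K`.
Since every point of `K = Φ(K)` lies in some `Φ k` with `k ∈ K`, iterating it gives
`infDist y Φⁿ(Fix Φ) ≤ λⁿ · diam K` for all `y ∈ K`, hence `K` lies in the closure of the orbit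
of `Fix Φ`; the reverse inclusion holds because that orbit stays in the closed set `K`.
-/

namespace Metric

variable {X : Type*} [PseudoMetricSpace X]

theorem le_mul_infDist_of_forall_le {x : X} {s : Set X} {d lam : ℝ} (hlam : 0 ≤ lam)
    (hs : s.Nonempty) (h : ∀ z ∈ s, d ≤ lam * dist x z) : d ≤ lam * infDist x s := by
  have : Nonempty s := hs.to_subtype
  rw [infDist_eq_iInf, Real.mul_iInf_of_nonneg hlam]
  exact le_ciInf fun z => h z z.2

end Metric

open Metric

section SetValued

variable {X : Type*} (Φ : X → Set X)

theorem subset_sImage {A : Set X} {a : X} (ha : a ∈ A) : Φ a ⊆ sImage Φ A :=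
  subset_biUnion_of_mem (u := Φ) ha

theorem sImage_subset_sImage {A B : Set X} (h : A ⊆ B) : sImage Φ A ⊆ sImage Φ B :=
  biUnion_subset_biUnion_left h

theorem mem_sImage {A : Set X} {y : X} : y ∈ sImage Φ A ↔ ∃ a ∈ A, y ∈ Φ a := by
  simp only [sImage, mem_iUnion₂, exists_prop]

theorem sIter_nonempty (hne : ∀ x, (Φ x).Nonempty) {A : Set X} (hA : A.Nonempty) :
    ∀ n, (sIter Φ n A).Nonempty
  | 0 => hA
  | n + 1 =>
    let ⟨a, ha⟩ := sIter_nonempty hne hA n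
    (hne a).mono (subset_sImage Φ ha)

theorem sIter_subset {A K : Set X} (hAK : A ⊆ K) (hK : sImage Φ K ⊆ K) :
    ∀ n, sIter Φ n A ⊆ K
  | 0 => hAK
  | n + 1 => (sImage_subset_sImage Φ (sIter_subset hAK hK n)).trans hK

end SetValued

section Contraction

variable {X : Type*} [PseudoMetricSpace X] (Φ : X → Set X)

variable {lam : ℝ} (hc : ∀ x, IsCompact (Φ x))
  (hlip : ∀ x y, hausdorffDist (Φ x) (Φ y) ≤ lam * dist x y)
include hc hlip

theorem infDist_le_of_mem (hne : ∀ x, (Φ x).Nonempty) {x x' y : X} (hy : y ∈ Φ x) :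
    infDist y (Φ x') ≤ lam * dist x x' :=
  (infDist_le_hausdorffDist_of_mem hy (hausdorffEDist_ne_top_of_nonempty_of_bounded (hne x)
    (hne x') (hc x).isBounded (hc x').isBounded)).trans (hlip x x')

theorem infDist_sImage_le (hne : ∀ x, (Φ x).Nonempty) (hlam0 : 0 ≤ lam) {A : Set X}
    (hA : A.Nonempty) {k y : X} (hy : y ∈ Φ k) :
    infDist y (sImage Φ A) ≤ lam * infDist k A :=
  le_mul_infDist_of_forall_le hlam0 hA fun z hz =>
    (infDist_le_infDist_of_subset (subset_sImage Φ hz) (hne z)).trans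
      (infDist_le_of_mem Φ hc hlip hne hy)

theorem sFix_subset (hne : ∀ x, (Φ x).Nonempty) (hlam0 : 0 ≤ lam) (hlam : lam < 1)
    {K : Set X} (hK : IsClosed K) (hKne : K.Nonempty) (hKinv : sImage Φ K ⊆ K) :
    sFix Φ ⊆ K := by
  intro x hx
  have hle : infDist x K ≤ lam * infDist x K :=
    le_mul_infDist_of_forall_le hlam0 hKne fun k hk =>
      (infDist_le_infDist_of_subset ((subset_sImage Φ hk).trans hKinv) (hne k)).trans
        (infDist_le_of_mem Φ hc hlip hne hx)
  have hzero : infDist x K = 0 := by nlinarith [infDist_nonneg (x := x) (s := K)]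
  exact (hK.mem_iff_infDist_zero hKne).2 hzero

theorem infDist_sIter_le (hne : ∀ x, (Φ x).Nonempty) (hlam0 : 0 ≤ lam) {A K : Set X}
    (hA : A.Nonempty) (hK : K ⊆ sImage Φ K) {r : ℝ} (hr : ∀ k ∈ K, infDist k A ≤ r) :
    ∀ n, ∀ y ∈ K, infDist y (sIter Φ n A) ≤ lam ^ n * r
  | 0, y, hy => by simpa [sIter] using hr y hy
  | n + 1, y, hy => by
    obtain ⟨k, hk, hyk⟩ := (mem_sImage Φ).1 (hK hy)
    calc infDist y (sIter Φ (n + 1) A)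
        ≤ lam * infDist k (sIter Φ n A) :=
          infDist_sImage_le Φ hc hlip hne hlam0 (sIter_nonempty Φ hne hA n) hyk
      _ ≤ lam * (lam ^ n * r) :=
          mul_le_mul_of_nonneg_left (infDist_sIter_le hne hlam0 hA hK hr n k hk) hlam0
      _ = lam ^ (n + 1) * r := by ring

theorem subset_closure_iUnion_sIter (hne : ∀ x, (Φ x).Nonempty) (hlam0 : 0 ≤ lam)
    (hlam : lam < 1) {A K : Set X} (hA : A.Nonempty) (hK : K ⊆ sImage Φ K) {r : ℝ}
    (hr : ∀ k ∈ K, infDist k A ≤ r) : K ⊆ closure (⋃ n, sIter Φ n A) := by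
  intro y hy
  have hbound : ∀ n, infDist y (⋃ n, sIter Φ n A) ≤ lam ^ n * r := fun n =>
    (infDist_le_infDist_of_subset (subset_iUnion _ n) (sIter_nonempty Φ hne hA n)).trans
      (infDist_sIter_le Φ hc hlip hne hlam0 hA hK hr n y hy)
  have hlim : Filter.Tendsto (fun n => lam ^ n * r) Filter.atTop (nhds 0) := by
    simpa using (tendsto_pow_atTop_nhds_zero_of_lt_one hlam0 hlam).mul_const r
  have hUne : (⋃ n, sIter Φ n A).Nonempty := hA.mono (subset_iUnion (sIter Φ · A) 0)
  exact (mem_closure_iff_infDist_zero hUne).2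
    (le_antisymm (ge_of_tendsto' hlim hbound) infDist_nonneg)

end Contraction

theorem stmt11_general {X : Type*} [MetricSpace X]
    (Φ : X → Set X) (lam : ℝ) (hlam0 : 0 ≤ lam) (hlam : lam < 1)
    (hc : ∀ x, IsCompact (Φ x)) (hne : ∀ x, (Φ x).Nonempty)
    (hlip : ∀ x y, Metric.hausdorffDist (Φ x) (Φ y) ≤ lam * dist x y)
    (hFix : (sFix Φ).Nonempty)
    (K : Set X) (hK : IsCompact K) (hKne : K.Nonempty) (hKfix : sImage Φ K = K) :
    sFix Φ ⊆ K ∧ closure (⋃ n, sIter Φ n (sFix Φ)) = K := by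
  have hFixK : sFix Φ ⊆ K :=
    sFix_subset Φ hc hlip hne hlam0 hlam hK.isClosed hKne hKfix.le
  have hdiam : ∀ k ∈ K, infDist k (sFix Φ) ≤ diam K := fun k hk =>
    let ⟨x, hx⟩ := hFix
    (infDist_le_dist_of_mem hx).trans (dist_le_diam_of_mem hK.isBounded hk (hFixK hx))
  refine ⟨hFixK, subset_antisymm ?_ ?_⟩
  · exact closure_minimal (iUnion_subset (sIter_subset Φ hFixK hKfix.le)) hK.isClosed
  · exact subset_closure_iUnion_sIter Φ hc hlip hne hlam0 hlam hFix hKfix.ge hdiam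

theorem stmt11 {X : Type*} [MetricSpace X] [CompleteSpace X]
    (Φ : X → Set X) (lam : ℝ) (hlam0 : 0 ≤ lam) (hlam : lam < 1)
    (hc : ∀ x, IsCompact (Φ x)) (hne : ∀ x, (Φ x).Nonempty)
    (hlip : ∀ x y, Metric.hausdorffDist (Φ x) (Φ y) ≤ lam * dist x y)
    (hFix : (sFix Φ).Nonempty)
    (K : Set X) (hK : IsCompact K) (hKne : K.Nonempty) (hKfix : sImage Φ K = K)
    (hKuniq : ∀ K' : Set X, IsCompact K' → K'.Nonempty → sImage Φ K' = K' → K' = K) :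
    sFix Φ ⊆ K ∧ closure (⋃ n, sIter Φ n (sFix Φ)) = K :=
  stmt11_general Φ lam hlam0 hlam hc hne hlip hFix K hK hKne hKfix
end

section
/- Let Φ: ℝ ⊸ ℝ be given by Φ(x) = {3x, 3x−2}. Then Fix(Φ) = {0, 1}, and the fixed fractal 𝔽(Φ) = closure(⋃_n Φⁿ({0,1})) equals (−M) ∪ (M+1), where M is the macro-Cantor set; in particular 𝔽(Φ) ⊆ ℤ is closed and discrete in ℝ. -/
open Set

/-- The action of the multi-function `Φ : x ↦ {3x, 3x − 2}` on subsets of `ℝ`. -/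
def macroMap (A : Set ℝ) : Set ℝ := (fun x => 3 * x) '' A ∪ (fun x => 3 * x - 2) '' A

/-- Iterates of `macroMap`. -/
def macroIter : ℕ → Set ℝ → Set ℝ
  | 0, A => A
  | n + 1, A => macroMap (macroIter n A)

/-- The macro-Cantor set: all finite sums `Σ 2xₖ 3^k` with `xₖ ∈ {0,1}`. -/
def macroCantor : Set ℝ := {r | ∃ s : Finset ℕ, r = ∑ k ∈ s, 2 * (3 : ℝ) ^ k}

/-! If `x = -m` or `x = m + 1`, then `3x` and `3x - 2` are again of these two forms, with `m`
replaced by `3m` or `3m + 2`: a base-3 digit `0` or `2` is appended to `m`. Starting from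
`0 = -0` and `1 = 0 + 1`, the iterates therefore sweep out exactly the points `-m` and `m + 1`
with `m ∈ M`. These are integers, so the union is already closed, and it is discrete. -/

lemma macroMap_subset_iff {A S : Set ℝ} :
    macroMap A ⊆ S ↔ ∀ x ∈ A, 3 * x ∈ S ∧ 3 * x - 2 ∈ S := by
  rw [macroMap, union_subset_iff, image_subset_iff, image_subset_iff]
  simp only [subset_def, mem_preimage, forall₂_and]

lemma macroMap_mono {A B : Set ℝ} (h : A ⊆ B) : macroMap A ⊆ macroMap B :=
  union_subset_union (image_mono h) (image_mono h)

lemma macroMap_iUnion_macroIter_subset (A : Set ℝ) :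
    macroMap (⋃ n, macroIter n A) ⊆ ⋃ n, macroIter n A := by
  refine macroMap_subset_iff.2 fun x hx => ?_
  obtain ⟨n, hn⟩ := mem_iUnion.1 hx
  exact ⟨mem_iUnion.2 ⟨n + 1, Or.inl ⟨x, hn, rfl⟩⟩, mem_iUnion.2 ⟨n + 1, Or.inr ⟨x, hn, rfl⟩⟩⟩

lemma iUnion_macroIter_subset {A S : Set ℝ} (hA : A ⊆ S) (hS : macroMap S ⊆ S) :
    ⋃ n, macroIter n A ⊆ S := by
  refine iUnion_subset fun n => ?_
  induction n with
  | zero => exact hA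
  | succ n ih => exact (macroMap_mono ih).trans hS

noncomputable def cantorSum (s : Finset ℕ) : ℝ := ∑ k ∈ s, 2 * 3 ^ k

lemma cantorSum_map_succ (s : Finset ℕ) :
    cantorSum (s.map ⟨Nat.succ, Nat.succ_injective⟩) = 3 * cantorSum s := by
  simp only [cantorSum, Finset.sum_map, Finset.mul_sum]
  exact Finset.sum_congr rfl fun k _ => by rw [Function.Embedding.coeFn_mk, pow_succ]; ring

lemma cantorSum_insert_zero_map_succ (s : Finset ℕ) :
    cantorSum (insert 0 (s.map ⟨Nat.succ, Nat.succ_injective⟩)) = 3 * cantorSum s + 2 := by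
  rw [cantorSum, Finset.sum_insert (by simp), ← cantorSum, cantorSum_map_succ]
  ring

lemma map_succ_preimage_succ (s : Finset ℕ) :
    (s.preimage Nat.succ Nat.succ_injective.injOn).map ⟨Nat.succ, Nat.succ_injective⟩ =
      s.erase 0 := by
  ext k
  cases k <;> simp

lemma cantorSum_eq_three_mul_preimage_succ (s : Finset ℕ) :
    cantorSum s = 3 * cantorSum (s.preimage Nat.succ Nat.succ_injective.injOn) +
      if 0 ∈ s then 2 else 0 := by
  rw [← cantorSum_map_succ, map_succ_preimage_succ]
  split_ifs with h0
  · rw [cantorSum, cantorSum, ← Finset.sum_erase_add s _ h0]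
    norm_num
  · rw [Finset.erase_eq_of_notMem h0, add_zero]

lemma zero_mem_macroCantor : (0 : ℝ) ∈ macroCantor := ⟨∅, by simp⟩

lemma three_mul_mem_macroCantor {m : ℝ} (hm : m ∈ macroCantor) : 3 * m ∈ macroCantor := by
  obtain ⟨s, rfl⟩ := hm
  exact ⟨_, (cantorSum_map_succ s).symm⟩

lemma three_mul_add_two_mem_macroCantor {m : ℝ} (hm : m ∈ macroCantor) :
    3 * m + 2 ∈ macroCantor := by
  obtain ⟨s, rfl⟩ := hm
  exact ⟨_, (cantorSum_insert_zero_map_succ s).symm⟩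

theorem macroCantor_induction {P : ℝ → Prop} (zero : P 0) (three_mul : ∀ m, P m → P (3 * m))
    (three_mul_add_two : ∀ m, P m → P (3 * m + 2)) : ∀ m ∈ macroCantor, P m := by
  suffices ∀ n, ∀ s ⊆ Finset.range n, P (cantorSum s) by
    rintro _ ⟨s, rfl⟩
    exact this _ s (Finset.subset_range_sup_succ s)
  intro n
  induction n with
  | zero =>
    intro s hs
    simpa [Finset.subset_empty.1 hs, cantorSum] using zero
  | succ n ih =>
    intro s hs
    have ht : s.preimage Nat.succ Nat.succ_injective.injOn ⊆ Finset.range n := fun k hk => by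
      simpa using hs (Finset.mem_preimage.1 hk)
    rw [cantorSum_eq_three_mul_preimage_succ]
    split_ifs
    · exact three_mul_add_two _ (ih _ ht)
    · simpa using three_mul _ (ih _ ht)

lemma macroCantor_subset_range_intCast : macroCantor ⊆ range (Int.cast : ℤ → ℝ) := by
  rintro _ ⟨s, rfl⟩
  exact ⟨∑ k ∈ s, 2 * 3 ^ k, by push_cast; rfl⟩

def macroFractal : Set ℝ := Neg.neg '' macroCantor ∪ (fun m => m + 1) '' macroCantor

lemma macroMap_macroFractal_subset : macroMap macroFractal ⊆ macroFractal := by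
  refine macroMap_subset_iff.2 ?_
  rintro _ (⟨m, hm, rfl⟩ | ⟨m, hm, rfl⟩)
  · exact ⟨Or.inl ⟨3 * m, three_mul_mem_macroCantor hm, by ring⟩,
      Or.inl ⟨3 * m + 2, three_mul_add_two_mem_macroCantor hm, by ring⟩⟩
  · exact ⟨Or.inr ⟨3 * m + 2, three_mul_add_two_mem_macroCantor hm, by ring⟩,
      Or.inr ⟨3 * m, three_mul_mem_macroCantor hm, by ring⟩⟩

lemma macroFractal_subset_iUnion_macroIter :
    macroFractal ⊆ ⋃ n, macroIter n ({0, 1} : Set ℝ) := by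
  set U := ⋃ n, macroIter n ({0, 1} : Set ℝ)
  have hU := macroMap_subset_iff.1 (macroMap_iUnion_macroIter_subset ({0, 1} : Set ℝ))
  have key : ∀ m ∈ macroCantor, -m ∈ U ∧ m + 1 ∈ U := by
    refine macroCantor_induction ?_ (fun m ⟨hneg, hsucc⟩ => ?_) (fun m ⟨hneg, hsucc⟩ => ?_)
    · exact ⟨mem_iUnion.2 ⟨0, by simp [macroIter]⟩, mem_iUnion.2 ⟨0, by simp [macroIter]⟩⟩
    · constructor
      · convert (hU _ hneg).1 using 1; ring
      · convert (hU _ hsucc).2 using 1; ring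
    · constructor
      · convert (hU _ hneg).2 using 1; ring
      · convert (hU _ hsucc).1 using 1; ring
  rintro _ (⟨m, hm, rfl⟩ | ⟨m, hm, rfl⟩)
  exacts [(key m hm).1, (key m hm).2]

lemma iUnion_macroIter_eq_macroFractal :
    ⋃ n, macroIter n ({0, 1} : Set ℝ) = macroFractal := by
  refine (iUnion_macroIter_subset ?_ macroMap_macroFractal_subset).antisymm
    macroFractal_subset_iUnion_macroIter
  rintro x (rfl | rfl)
  · exact Or.inl ⟨0, zero_mem_macroCantor, neg_zero⟩
  · exact Or.inr ⟨0, zero_mem_macroCantor, zero_add 1⟩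

lemma macroFractal_subset_range_intCast : macroFractal ⊆ range (Int.cast : ℤ → ℝ) := by
  rintro _ (⟨m, hm, rfl⟩ | ⟨m, hm, rfl⟩) <;> obtain ⟨z, rfl⟩ := macroCantor_subset_range_intCast hm
  exacts [⟨-z, Int.cast_neg z⟩, ⟨z + 1, by push_cast; rfl⟩]

lemma isClosed_of_subset_range_intCast {A : Set ℝ} (h : A ⊆ range (Int.cast : ℤ → ℝ)) :
    IsClosed A := by
  rw [← inter_eq_self_of_subset_left h, ← image_preimage_eq_inter_range]
  exact Int.isClosedEmbedding_coe_real.isClosedMap _ (isClosed_discrete _)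

lemma discreteTopology_of_subset_range_intCast {A : Set ℝ}
    (h : A ⊆ range (Int.cast : ℤ → ℝ)) : DiscreteTopology A :=
  have : DiscreteTopology (range (Int.cast : ℤ → ℝ)) :=
    Int.isClosedEmbedding_coe_real.isEmbedding.toHomeomorph.symm.isEmbedding.discreteTopology
  DiscreteTopology.of_subset this h

lemma closure_iUnion_macroIter_eq_macroFractal :
    closure (⋃ n, macroIter n ({0, 1} : Set ℝ)) = macroFractal := by
  rw [iUnion_macroIter_eq_macroFractal,
    (isClosed_of_subset_range_intCast macroFractal_subset_range_intCast).closure_eq]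

lemma setOf_mem_macroPair_eq : {x : ℝ | x ∈ ({3 * x, 3 * x - 2} : Set ℝ)} = {0, 1} := by
  ext x
  simp only [mem_ofPred_eq, mem_insert_iff, mem_singleton_iff]
  constructor <;> rintro (h | h)
  exacts [Or.inl (by linarith), Or.inr (by linarith), Or.inl (by rw [h]; norm_num),
    Or.inr (by rw [h]; norm_num)]

theorem stmt16 :
    {x : ℝ | x ∈ ({3 * x, 3 * x - 2} : Set ℝ)} = {0, 1} ∧
    closure (⋃ n, macroIter n ({0, 1} : Set ℝ)) =
      Neg.neg '' macroCantor ∪ (fun m => m + 1) '' macroCantor ∧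
    closure (⋃ n, macroIter n ({0, 1} : Set ℝ)) ⊆ Set.range (Int.cast : ℤ → ℝ) ∧
    IsClosed (closure (⋃ n, macroIter n ({0, 1} : Set ℝ))) ∧
    DiscreteTopology ↥(closure (⋃ n, macroIter n ({0, 1} : Set ℝ))) := by
  rw [closure_iUnion_macroIter_eq_macroFractal]
  exact ⟨setOf_mem_macroPair_eq, rfl, macroFractal_subset_range_intCast,
    isClosed_of_subset_range_intCast macroFractal_subset_range_intCast,
    discreteTopology_of_subset_range_intCast macroFractal_subset_range_intCast⟩
end
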